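/- For every nonnegative integer n, P_n(x) = T(n,1) + Σ_{k=1}^{n+1} (1/k) T(n+1,k) x^k, where T(n,k) are the tangent numbers of order k. -/

import Mathlib

noncomputable def P : ℕ → Polynomial ℝ
  | 0 => Polynomial.X
  | n + 1 => (1 + Polynomial.X ^ 2) * Polynomial.derivative (P n)

noncomputable def T (n k : ℕ) : ℝ :=
  iteratedDeriv n (fun t : ℝ => Real.tan t ^ k) 0

/-!
Since `tan' = 1 + tan²`, differentiating `tan^(k+1)` gives `(k+1) (tan^k + tan^(k+2))`, hence
`T(n+1, k+1) = (k+1) (T(n, k) + T(n, k+2))`. The coefficients of `(1 + x²) p'` are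
`[x^(k+1)] = (k+2) c_(k+2) + k c_k` and `[x^0] = c_1`, so by induction on `n` the numbers
`k · [x^k] P_n` obey the same recurrence and initial values as `T(n+1, k)`. Thus
`T(n+1, k) = k · [x^k] P_n` and `T(n, 1) = [x^0] P_n`, which is the claimed expansion since
`deg P_n ≤ n + 1`.
-/

open Polynomial Filter Topology

namespace Real

theorem hasDerivAt_tan_pow_succ {x : ℝ} (hx : cos x ≠ 0) (k : ℕ) :
    HasDerivAt (fun t => tan t ^ (k + 1)) ((k + 1) * (tan x ^ k + tan x ^ (k + 2))) x := by
  have hsec : 1 / cos x ^ 2 = 1 + tan x ^ 2 := by rw [one_div, ← inv_one_add_tan_sq hx, inv_inv]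
  refine ((hasDerivAt_tan hx).fun_pow (k + 1)).congr_deriv ?_
  rw [hsec, Nat.add_sub_cancel]
  push_cast
  ring

theorem deriv_tan_pow_succ_eventuallyEq (k : ℕ) :
    deriv (fun t => tan t ^ (k + 1)) =ᶠ[𝓝 0] fun t => (k + 1) * (tan t ^ k + tan t ^ (k + 2)) := by
  filter_upwards [continuous_cos.continuousAt.eventually_ne (by simp : cos 0 ≠ 0)] with x hx
  exact (hasDerivAt_tan_pow_succ hx k).deriv

theorem contDiffAt_tan_pow_zero (n k : ℕ) : ContDiffAt ℝ n (fun t => tan t ^ k) 0 :=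
  (contDiffAt_tan.2 (by simp)).pow k

end Real

theorem T_zero (k : ℕ) : T 0 k = 0 ^ k := by
  simp [T]

theorem T_succ_zero (n : ℕ) : T (n + 1) 0 = 0 := by
  simp [T, iteratedDeriv_const]

theorem T_succ_succ (n k : ℕ) : T (n + 1) (k + 1) = (k + 1) * (T n k + T n (k + 2)) := by
  rw [T, iteratedDeriv_succ', (Real.deriv_tan_pow_succ_eventuallyEq k).iteratedDeriv_eq,
    iteratedDeriv_const_mul_field,
    iteratedDeriv_fun_add (Real.contDiffAt_tan_pow_zero n k) (Real.contDiffAt_tan_pow_zero n _)]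
  rfl

namespace Polynomial

variable {R : Type*} [CommSemiring R]

theorem coeff_one_add_X_sq_mul_derivative_zero (p : R[X]) :
    ((1 + X ^ 2) * derivative p).coeff 0 = p.coeff 1 := by
  simp [add_mul, coeff_derivative]

theorem coeff_one_add_X_sq_mul_derivative_succ (p : R[X]) (k : ℕ) :
    ((1 + X ^ 2) * derivative p).coeff (k + 1) = (k + 2) * p.coeff (k + 2) + k * p.coeff k := by
  rw [add_mul, one_mul, coeff_add, mul_comm, coeff_mul_X_pow', coeff_derivative]
  rcases k with _ | k
  · simp [mul_comm, one_add_one_eq_two]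
  · rw [if_pos (by omega), show k + 1 + 1 - 2 = k by omega, coeff_derivative]
    push_cast
    ring

end Polynomial

theorem natDegree_P_le (n : ℕ) : (P n).natDegree ≤ n + 1 := by
  induction n with
  | zero => simp [P]
  | succ n ih =>
    calc (P (n + 1)).natDegree
        ≤ (1 + X ^ 2 : ℝ[X]).natDegree + (derivative (P n)).natDegree := natDegree_mul_le
      _ ≤ 2 + n := by
        gcongr
        · exact (natDegree_add_le _ _).trans (by simp)
        · exact natDegree_derivative_le _ |>.trans (by omega)
      _ = n + 1 + 1 := by omega

theorem T_succ_eq_mul_coeff_P (n k : ℕ) : T (n + 1) k = k * (P n).coeff k := by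
  induction n generalizing k with
  | zero =>
    rcases k with _ | k
    · simp [T_succ_zero]
    · rcases k with _ | k <;> simp [T_succ_succ, T_zero, P, coeff_X]
  | succ n ih =>
    rcases k with _ | k
    · simp [T_succ_zero]
    · rw [T_succ_succ, ih, ih, P, coeff_one_add_X_sq_mul_derivative_succ]
      push_cast
      ring

theorem coeff_P_zero (n : ℕ) : (P n).coeff 0 = T n 1 := by
  cases n with
  | zero => simp [P, T_zero]
  | succ n => rw [P, coeff_one_add_X_sq_mul_derivative_zero, T_succ_eq_mul_coeff_P]; simp

theorem P_eq_tangent_numbers (n : ℕ) (x : ℝ) :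
    (P n).eval x
      = T n 1 + ∑ k ∈ Finset.Icc 1 (n + 1), (1 / (k : ℝ)) * T (n + 1) k * x ^ k := by
  rw [eval_eq_sum_range' (n := n + 2) (Nat.lt_succ_of_le (natDegree_P_le n)),
    Finset.range_eq_Ico, Finset.sum_eq_sum_Ico_succ_bot (by omega), coeff_P_zero]
  congr 1
  · simp
  · refine Finset.sum_congr rfl fun k hk => ?_
    have hk0 : (k : ℝ) ≠ 0 := Nat.cast_ne_zero.2 (Nat.one_le_iff_ne_zero.1 (Finset.mem_Ico.1 hk).1)
    rw [T_succ_eq_mul_coeff_P]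
    field_simp
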